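/- Let Ω ⊆ ℝ² be the rooms-and-halls domain. Then Ω is not an L^s-averaging domain for any 1 ≤ s < ∞. -/

import Mathlib

open MeasureTheory Metric Set
open scoped ENNReal

/-- The normalized `L^s`-mean oscillation integral `(1/|E|) ∫_E |u - u_E|^s dz`. -/
noncomputable def lsAvgE {n : ℕ} (s : ℝ) (u : EuclideanSpace ℝ (Fin n) → ℝ)
    (E : Set (EuclideanSpace ℝ (Fin n))) : ℝ≥0∞ :=
  (volume E)⁻¹ * ∫⁻ z in E, ENNReal.ofReal (|u z - (⨍ y in E, u y)| ^ s)

/-- `Ω` is an `L^s`-averaging domain: there is a finite constant `C` such that for every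
locally integrable `u`, `((1/|Ω|) ∫_Ω |u - u_Ω|^s)^{1/s} ≤ C · sup_B ((1/|B|) ∫_B |u - u_B|^s)^{1/s}`,
the supremum over all open balls `B ⊆ Ω`. -/
def IsLsAveragingDomain {n : ℕ} (s : ℝ) (Ω : Set (EuclideanSpace ℝ (Fin n))) : Prop :=
  ∃ C : ℝ≥0∞, C ≠ ⊤ ∧ ∀ u : EuclideanSpace ℝ (Fin n) → ℝ,
    MeasureTheory.LocallyIntegrableOn u Ω volume →
      (lsAvgE s u Ω) ^ (1/s) ≤
        C * ⨆ (x : EuclideanSpace ℝ (Fin n)) (ρ : ℝ) (_ : 0 < ρ ∧ ball x ρ ⊆ Ω),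
          (lsAvgE s u (ball x ρ)) ^ (1/s)

/-- `x_j = 1 − 1/2^j`. -/
noncomputable def rhx (j : ℕ) : ℝ := 1 - 1/2^j

/-- `x′_j = x_j + 1/2^{j+2}` for `j ≥ 1`, and `x′₀ = 0`. -/
noncomputable def rhx' (j : ℕ) : ℝ := if j = 0 then 0 else rhx j + 1/2^(j+2)

/-- The room `R_j = [x′_j, x_{j+1}] × [0, 1]`. -/
def rhRoom (j : ℕ) : Set (EuclideanSpace ℝ (Fin 2)) :=
  {z | z 0 ∈ Set.Icc (rhx' j) (rhx (j+1)) ∧ z 1 ∈ Set.Icc (0:ℝ) 1}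

/-- The hall `H_j = [x_j, x′_j] × [0, 1/(j+1)!]`. -/
def rhHall (j : ℕ) : Set (EuclideanSpace ℝ (Fin 2)) :=
  {z | z 0 ∈ Set.Icc (rhx j) (rhx' j) ∧ z 1 ∈ Set.Icc (0:ℝ) (1 / (Nat.factorial (j+1) : ℝ))}

/-- The half `A = R₀ ∪ ⋃_{j≥1} (R_j ∪ H_j)` of the rooms-and-halls domain. -/
def rhA : Set (EuclideanSpace ℝ (Fin 2)) :=
  rhRoom 0 ∪ ⋃ j ∈ Set.Ici 1, (rhRoom j ∪ rhHall j)

/-- The reflection `f(x, y) = (−x, y)`. -/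
def rhRefl (z : EuclideanSpace ℝ (Fin 2)) : EuclideanSpace ℝ (Fin 2) :=
  WithLp.toLp 2 (fun (i : Fin 2) => if i = 0 then -(z 0) else z 1)

/-- The rooms-and-halls domain `Ω = int(A ∪ f(A))`. -/
def roomsAndHalls : Set (EuclideanSpace ℝ (Fin 2)) := interior (rhA ∪ rhRefl '' rhA)

/-! The hall `H_j` has width `2^{-(j+2)}` but height only `1/(j+1)!`, so a ball inside `Ω` meets
the vertical strip over `H_j` in a horizontal interval of length at most `1/(j+1)!`. Hence the
function of `x` that rises with slope `(j+1)!` across that strip and is constant elsewhere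
oscillates by at most `1` on every ball in `Ω`, and all ball averages are at most `1`. But it
differs by `(j+1)!/2^{j+2}` between the rooms `R_0` and `R_j`, of areas `1/2` and `2^{-(j+2)}`, so
its mean oscillation over `Ω` is at least a multiple of `((j+1)!/2^{j+3})^s 2^{-(j+2)}`, which is
unbounded in `j`. -/

open Filter Topology
open scoped Nat

theorem tendsto_factorial_div_pow_atTop {c : ℝ} (hc : 0 < c) :
    Tendsto (fun n : ℕ => (n ! : ℝ) / c ^ n) atTop atTop := by
  refine tendsto_atTop_mono (fun n => ?_) <|
    (tendsto_pow_atTop_atTop_of_one_lt one_lt_two).atTop_div_const (Real.exp_pos (2 * c))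
  have := Real.pow_div_factorial_le_exp (2 * c) (by positivity) n
  rw [div_le_iff₀ (by exact_mod_cast n.factorial_pos), mul_pow] at this
  rw [div_le_div_iff₀ (Real.exp_pos _) (pow_pos hc n)]
  linarith

section MeanOscillation

variable {n : ℕ} {s : ℝ}

theorem lsAvgE_le_one_of_mapsTo_Icc {u : EuclideanSpace ℝ (Fin n) → ℝ}
    {E : Set (EuclideanSpace ℝ (Fin n))} {a : ℝ} (hs : 0 ≤ s) (hE : MeasurableSet E)
    (hE₀ : volume E ≠ 0) (hE_top : volume E ≠ ∞) (hu : IntegrableOn u E)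
    (hua : MapsTo u E (Icc a (a + 1))) : lsAvgE s u E ≤ 1 := by
  have havg : ⨍ y in E, u y ∈ Icc a (a + 1) :=
    (convex_Icc a (a + 1)).set_average_mem isClosed_Icc hE₀ hE_top
      (ae_restrict_of_forall_mem hE fun _ hz => hua hz) hu
  have hpt : ∀ z ∈ E, ENNReal.ofReal (|u z - ⨍ y in E, u y| ^ s) ≤ 1 := fun z hz => by
    have hdist : |u z - ⨍ y in E, u y| ≤ 1 := by
      rw [abs_sub_le_iff]; constructor <;> linarith [(hua hz).1, (hua hz).2, havg.1, havg.2]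
    exact ENNReal.ofReal_le_one.2 (Real.rpow_le_one (abs_nonneg _) hdist hs)
  calc lsAvgE s u E ≤ (volume E)⁻¹ * ∫⁻ _ in E, 1 :=
        mul_le_mul_right (setLIntegral_mono measurable_const hpt) _
    _ = 1 := by rw [setLIntegral_const, one_mul, ENNReal.inv_mul_cancel hE₀ hE_top]

theorem ofReal_mul_volume_le_setLIntegral {u : EuclideanSpace ℝ (Fin n) → ℝ}
    {Ω P : Set (EuclideanSpace ℝ (Fin n))} {α : ℝ} (hP : MeasurableSet P) (hPΩ : P ⊆ Ω)
    (hu : EqOn u (fun _ => α) P) (c : ℝ) :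
    ENNReal.ofReal (|α - c| ^ s) * volume P ≤ ∫⁻ z in Ω, ENNReal.ofReal (|u z - c| ^ s) :=
  calc ENNReal.ofReal (|α - c| ^ s) * volume P
      = ∫⁻ z in P, ENNReal.ofReal (|u z - c| ^ s) := by
        rw [setLIntegral_congr_fun hP fun z hz => by rw [hu hz], setLIntegral_const]
    _ ≤ ∫⁻ z in Ω, ENNReal.ofReal (|u z - c| ^ s) := lintegral_mono_set hPΩ

/-- Whatever `u_Ω` is, it lies at distance at least `|β - α| / 2` from `α` or from `β`. -/
theorem lsAvgE_ge_of_eqOn {u : EuclideanSpace ℝ (Fin n) → ℝ}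
    {Ω P Q : Set (EuclideanSpace ℝ (Fin n))} {α β : ℝ} (hs : 0 ≤ s)
    (hP : MeasurableSet P) (hQ : MeasurableSet Q) (hPΩ : P ⊆ Ω) (hQΩ : Q ⊆ Ω)
    (huP : EqOn u (fun _ => α) P) (huQ : EqOn u (fun _ => β) Q) :
    (volume Ω)⁻¹ * (ENNReal.ofReal ((|β - α| / 2) ^ s) * min (volume P) (volume Q)) ≤
      lsAvgE s u Ω := by
  unfold lsAvgE
  gcongr
  set c := ⨍ y in Ω, u y
  rcases le_total (|β - α| / 2) |α - c| with hα | hα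
  · calc ENNReal.ofReal ((|β - α| / 2) ^ s) * min (volume P) (volume Q)
        ≤ ENNReal.ofReal (|α - c| ^ s) * volume P := by gcongr; exact min_le_left _ _
      _ ≤ _ := ofReal_mul_volume_le_setLIntegral hP hPΩ huP c
  · have hβ : |β - α| / 2 ≤ |β - c| := by
      linarith [abs_sub_le β c α, abs_sub_comm c α]
    calc ENNReal.ofReal ((|β - α| / 2) ^ s) * min (volume P) (volume Q)
        ≤ ENNReal.ofReal (|β - c| ^ s) * volume Q := by gcongr; exact min_le_right _ _
      _ ≤ _ := ofReal_mul_volume_le_setLIntegral hQ hQΩ huQ c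

theorem not_isLsAveragingDomain_of_tendsto {Ω : Set (EuclideanSpace ℝ (Fin n))} (hs : 0 < s)
    (u : ℕ → EuclideanSpace ℝ (Fin n) → ℝ) (hu : ∀ k, LocallyIntegrableOn (u k) Ω volume)
    (hball : ∀ k x ρ, 0 < ρ → ball x ρ ⊆ Ω → lsAvgE s (u k) (ball x ρ) ≤ 1)
    (hΩ : Tendsto (fun k => lsAvgE s (u k) Ω) atTop (𝓝 ∞)) : ¬ IsLsAveragingDomain s Ω := by
  rintro ⟨C, hC, hC_avg⟩
  have hbound : ∀ k, lsAvgE s (u k) Ω ≤ C ^ s := fun k => by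
    have hsup : (⨆ (x : EuclideanSpace ℝ (Fin n)) (ρ : ℝ) (_ : 0 < ρ ∧ ball x ρ ⊆ Ω),
        lsAvgE s (u k) (ball x ρ) ^ (1 / s)) ≤ 1 :=
      iSup₂_le fun x ρ => iSup_le fun hxρ =>
        ENNReal.rpow_le_one (hball k x ρ hxρ.1 hxρ.2) (by positivity)
    have := (hC_avg (u k) (hu k)).trans (mul_le_of_le_one_right' hsup)
    rwa [one_div, ENNReal.rpow_inv_le_iff hs] at this
  obtain ⟨k, hk⟩ := (hΩ.eventually (lt_mem_nhds (ENNReal.rpow_lt_top_of_nonneg hs.le hC))).exists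
  exact (hbound k).not_gt hk

end MeanOscillation

section Hall

theorem dist_le_abs_sub_add_abs_sub (z w : EuclideanSpace ℝ (Fin 2)) :
    dist z w ≤ |z 0 - w 0| + |z 1 - w 1| := by
  rw [EuclideanSpace.dist_eq, Fin.sum_univ_two, Real.dist_eq, Real.dist_eq,
    Real.sqrt_le_left (by positivity)]
  nlinarith [abs_nonneg (z 0 - w 0), abs_nonneg (z 1 - w 1), sq_abs (z 0 - w 0),
    sq_abs (z 1 - w 1)]

variable {Ω : Set (EuclideanSpace ℝ (Fin 2))} {p q h : ℝ}

/-- The vertical chord of the ball through the midpoint of `[m, M]` lies in the strip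
`(p, q) × ℝ` and has length at least `M - m`. -/
theorem sub_le_of_ball_subset {c : EuclideanSpace ℝ (Fin 2)} {ρ m M : ℝ}
    (hΩ : ∀ z ∈ Ω, z 0 ∈ Ioo p q → z 1 ∈ Icc 0 h) (hB : ball c ρ ⊆ Ω) (hmM : m < M)
    (hpm : p ≤ m) (hMq : M ≤ q) (hm : c 0 - ρ ≤ m) (hM : M ≤ c 0 + ρ) : M - m ≤ h := by
  set x := (m + M) / 2 with hx_def
  set r := (M - m) / 2 with hr_def
  have hchord : Ioo (c 1 - r) (c 1 + r) ⊆ Icc 0 h := fun y hy => by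
    have hxy : !₂[x, y] ∈ ball c ρ := by
      refine (dist_le_abs_sub_add_abs_sub _ _).trans_lt ?_
      simp only [Matrix.cons_val_zero, Matrix.cons_val_one]
      have hy' : |y - c 1| < r := abs_sub_lt_iff.2 ⟨by linarith [hy.2], by linarith [hy.1]⟩
      have := abs_le.2 (⟨by linarith, by linarith⟩ : -(ρ - r) ≤ x - c 0 ∧ x - c 0 ≤ ρ - r)
      linarith
    exact hΩ _ (hB hxy) ⟨show p < x by linarith, show x < q by linarith⟩
  have hr : c 1 - r < c 1 + r := by linarith
  have hclosure : Icc (c 1 - r) (c 1 + r) ⊆ Icc 0 h := by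
    rw [← closure_Ioo hr.ne]; exact closure_minimal hchord isClosed_Icc
  linarith [(Icc_subset_Icc_iff hr.le).1 hclosure]

noncomputable def hallRamp (p q h t : ℝ) : ℝ := (max p (min t q) - p) / h

theorem hallRamp_monotone (hh : 0 ≤ h) : Monotone (hallRamp p q h) := fun _ _ hst => by
  unfold hallRamp; gcongr

theorem continuous_hallRamp : Continuous (hallRamp p q h) := by
  unfold hallRamp; fun_prop

theorem hallRamp_of_le {t : ℝ} (ht : t ≤ p) : hallRamp p q h t = 0 := by
  rw [hallRamp, max_eq_left (min_le_left t q |>.trans ht), sub_self, zero_div]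

theorem hallRamp_of_ge {t : ℝ} (hpq : p ≤ q) (ht : q ≤ t) : hallRamp p q h t = (q - p) / h := by
  rw [hallRamp, min_eq_right ht, max_eq_right hpq]

theorem hallRamp_sub_le_one {c : EuclideanSpace ℝ (Fin 2)} {ρ : ℝ}
    (hΩ : ∀ z ∈ Ω, z 0 ∈ Ioo p q → z 1 ∈ Icc 0 h) (hh : 0 < h) (hB : ball c ρ ⊆ Ω) :
    hallRamp p q h (c 0 + ρ) - hallRamp p q h (c 0 - ρ) ≤ 1 := by
  rw [hallRamp, hallRamp, div_sub_div_same, sub_sub_sub_cancel_right, div_le_one hh]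
  set m := max p (min (c 0 - ρ) q)
  set M := max p (min (c 0 + ρ) q)
  rcases le_or_gt M m with hMm | hmM
  · linarith
  have hpm : p ≤ m := le_max_left _ _
  have hM : M = min (c 0 + ρ) q := max_eq_right <| by
    by_contra! h'
    have : M = p := max_eq_left h'.le
    linarith
  have hMq : M ≤ q := hM ▸ min_le_right _ _
  have hm : c 0 - ρ ≤ m := by
    rcases min_le_iff.1 (le_max_right p (min (c 0 - ρ) q)) with h' | h' <;> linarith
  exact sub_le_of_ball_subset hΩ hB hmM hpm hMq hm (hM ▸ min_le_left _ _)

theorem lsAvgE_hallRamp_ball_le_one {s : ℝ} {c : EuclideanSpace ℝ (Fin 2)} {ρ : ℝ}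
    (hΩ : ∀ z ∈ Ω, z 0 ∈ Ioo p q → z 1 ∈ Icc 0 h) (hh : 0 < h) (hs : 0 ≤ s) (hρ : 0 < ρ)
    (hB : ball c ρ ⊆ Ω) : lsAvgE s (fun z => hallRamp p q h (z 0)) (ball c ρ) ≤ 1 := by
  have hcont : Continuous fun z : EuclideanSpace ℝ (Fin 2) => hallRamp p q h (z 0) :=
    continuous_hallRamp.comp (by fun_prop)
  have hint : IntegrableOn (fun z => hallRamp p q h (z 0)) (ball c ρ) :=
    (hcont.locallyIntegrable.integrableOn_isCompact (isCompact_closedBall c ρ)).mono_set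
      ball_subset_closedBall
  refine lsAvgE_le_one_of_mapsTo_Icc (a := hallRamp p q h (c 0 - ρ)) hs measurableSet_ball
    (measure_ball_pos _ c hρ).ne' measure_ball_lt_top.ne hint fun z hz => ?_
  have hz0 : |z 0 - c 0| ≤ ρ := by
    rw [← Real.dist_eq]; exact (PiLp.dist_apply_le z c 0).trans (mem_ball.1 hz).le
  rw [abs_le] at hz0
  exact ⟨hallRamp_monotone hh.le (show c 0 - ρ ≤ z 0 by linarith),
    (hallRamp_monotone hh.le (show z 0 ≤ c 0 + ρ by linarith)).trans
      (by linarith [hallRamp_sub_le_one hΩ hh hB])⟩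

end Hall

theorem rhx_monotone : Monotone rhx := fun i j hij => by
  unfold rhx; gcongr; norm_num

theorem rhx_nonneg (j : ℕ) : 0 ≤ rhx j := by
  simpa [rhx] using rhx_monotone j.zero_le

theorem rhx_le_one (j : ℕ) : rhx j ≤ 1 :=
  sub_le_self 1 (by positivity)

theorem rhx'_sub_rhx {j : ℕ} (hj : 1 ≤ j) : rhx' j - rhx j = 1 / 2 ^ (j + 2) := by
  rw [rhx', if_neg (by omega)]; ring

theorem rhx_succ_sub_rhx' {j : ℕ} (hj : 1 ≤ j) : rhx (j + 1) - rhx' j = 1 / 2 ^ (j + 2) := by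
  rw [rhx', if_neg (by omega), rhx, rhx]; field_simp; ring

theorem rhx_le_rhx' (j : ℕ) : rhx j ≤ rhx' j := by
  rcases Nat.eq_zero_or_pos j with rfl | hj
  · simp [rhx, rhx']
  · linarith [rhx'_sub_rhx hj, one_div_pos.2 (pow_pos (zero_lt_two' ℝ) (j + 2))]

theorem rhx'_le_rhx_succ (j : ℕ) : rhx' j ≤ rhx (j + 1) := by
  rcases Nat.eq_zero_or_pos j with rfl | hj
  · norm_num [rhx, rhx']
  · linarith [rhx_succ_sub_rhx' hj, one_div_pos.2 (pow_pos (zero_lt_two' ℝ) (j + 2))]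

theorem rhx'_monotone : Monotone rhx' :=
  monotone_nat_of_le_succ fun j => (rhx'_le_rhx_succ j).trans (rhx_le_rhx' _)

theorem mem_rhA {z : EuclideanSpace ℝ (Fin 2)} (hz : z ∈ rhA) :
    (∃ k, z ∈ rhRoom k) ∨ ∃ k, z ∈ rhHall k := by
  rcases hz with hz | hz
  · exact .inl ⟨0, hz⟩
  · obtain ⟨k, -, hk | hk⟩ := mem_iUnion₂.1 hz
    exacts [.inl ⟨k, hk⟩, .inr ⟨k, hk⟩]

theorem rhRoom_subset_rhA (j : ℕ) : rhRoom j ⊆ rhA := by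
  rcases Nat.eq_zero_or_pos j with rfl | hj
  · exact subset_union_left
  · exact (subset_union_left.trans (subset_biUnion_of_mem (u := fun k => rhRoom k ∪ rhHall k)
      (mem_Ici.2 hj))).trans subset_union_right

theorem rhRefl_apply_zero (w : EuclideanSpace ℝ (Fin 2)) : rhRefl w 0 = -w 0 := rfl

theorem rhRefl_apply_one (w : EuclideanSpace ℝ (Fin 2)) : rhRefl w 1 = w 1 := rfl

theorem mem_Icc_of_mem_rhA {z : EuclideanSpace ℝ (Fin 2)} (hz : z ∈ rhA) :
    z 0 ∈ Icc 0 1 ∧ z 1 ∈ Icc 0 1 := by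
  rcases mem_rhA hz with ⟨k, ⟨hz0, hz1⟩⟩ | ⟨k, ⟨hz0, hz1⟩⟩
  · exact ⟨⟨(rhx_nonneg k).trans ((rhx_le_rhx' k).trans hz0.1), hz0.2.trans (rhx_le_one _)⟩, hz1⟩
  · refine ⟨⟨(rhx_nonneg k).trans hz0.1,
      hz0.2.trans ((rhx'_le_rhx_succ k).trans (rhx_le_one _))⟩, hz1.1, hz1.2.trans ?_⟩
    exact div_le_one_of_le₀ (by exact_mod_cast (k + 1).factorial_pos) (Nat.cast_nonneg _)

theorem isBounded_roomsAndHalls : Bornology.IsBounded roomsAndHalls := by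
  refine (isBounded_closedBall (x := 0) (r := 2)).subset fun z hz => ?_
  have hcoord : |z 0| ≤ 1 ∧ |z 1| ≤ 1 := by
    rcases interior_subset hz with hz | ⟨w, hw, rfl⟩
    all_goals
      obtain ⟨⟨h0, h1⟩, h2, h3⟩ := mem_Icc_of_mem_rhA ‹_›
      simp only [rhRefl_apply_zero, rhRefl_apply_one, abs_neg, abs_le]
      constructor <;> constructor <;> linarith
  rw [mem_closedBall]
  refine (dist_le_abs_sub_add_abs_sub z 0).trans ?_
  simp only [PiLp.zero_apply, sub_zero]
  linarith

theorem roomsAndHalls_strip (j : ℕ) :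
    ∀ z ∈ roomsAndHalls, z 0 ∈ Ioo (rhx j) (rhx' j) → z 1 ∈ Icc 0 (1 / ((j + 1)! : ℝ)) := by
  intro z hz ⟨hxz, hzx'⟩
  rcases interior_subset hz with hz | ⟨w, hw, rfl⟩
  · rcases mem_rhA hz with ⟨k, ⟨hk0, -⟩⟩ | ⟨k, ⟨hk0, hk1⟩⟩
    · rcases lt_or_ge k j with hkj | hjk
      · linarith [hk0.2, rhx_monotone (Nat.succ_le_of_lt hkj)]
      · linarith [hk0.1, rhx'_monotone hjk]
    · rcases lt_trichotomy k j with hkj | rfl | hjk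
      · linarith [hk0.2, rhx'_le_rhx_succ k, rhx_monotone (Nat.succ_le_of_lt hkj)]
      · exact hk1
      · linarith [hk0.1, rhx'_le_rhx_succ j, rhx_monotone (Nat.succ_le_of_lt hjk)]
  · rw [rhRefl_apply_zero] at hxz
    linarith [rhx_nonneg j, (mem_Icc_of_mem_rhA hw).1.1]

def rhOpenRoom (j : ℕ) : Set (EuclideanSpace ℝ (Fin 2)) :=
  {z | z 0 ∈ Ioo (rhx' j) (rhx (j + 1)) ∧ z 1 ∈ Ioo 0 1}

theorem isOpen_rhOpenRoom (j : ℕ) : IsOpen (rhOpenRoom j) :=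
  (isOpen_Ioo.preimage (by fun_prop)).inter (isOpen_Ioo.preimage (by fun_prop))

theorem rhOpenRoom_subset (j : ℕ) : rhOpenRoom j ⊆ roomsAndHalls :=
  interior_maximal (fun _ hz => .inl (rhRoom_subset_rhA j
    ⟨Ioo_subset_Icc_self hz.1, Ioo_subset_Icc_self hz.2⟩)) (isOpen_rhOpenRoom j)

theorem volume_setOf_apply_mem (S T : Set ℝ) :
    volume {z : EuclideanSpace ℝ (Fin 2) | z 0 ∈ S ∧ z 1 ∈ T} = volume S * volume T := by
  have hpi : {z : EuclideanSpace ℝ (Fin 2) | z 0 ∈ S ∧ z 1 ∈ T} =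
      (MeasurableEquiv.toLp 2 (Fin 2 → ℝ)).symm ⁻¹' univ.pi ![S, T] := by
    ext z; simp [Fin.forall_fin_two]
  rw [hpi, (EuclideanSpace.volume_preserving_symm_measurableEquiv_toLp
    (Fin 2)).measure_preimage_equiv, volume_pi_pi, Fin.prod_univ_two]
  rfl

theorem volume_rhOpenRoom (j : ℕ) :
    volume (rhOpenRoom j) = ENNReal.ofReal (rhx (j + 1) - rhx' j) := by
  rw [rhOpenRoom, volume_setOf_apply_mem, Real.volume_Ioo, Real.volume_Ioo]; simp

noncomputable def rhHallRamp (j : ℕ) (z : EuclideanSpace ℝ (Fin 2)) : ℝ :=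
  hallRamp (rhx j) (rhx' j) (1 / (j + 1)!) (z 0)

theorem lsAvgE_rhHallRamp_ge {s : ℝ} (hs : 0 ≤ s) {j : ℕ} (hj : 1 ≤ j) :
    (volume roomsAndHalls)⁻¹ *
        (ENNReal.ofReal (((j + 1)! / 2 ^ (j + 3) : ℝ) ^ s) * ENNReal.ofReal (1 / 2 ^ (j + 2))) ≤
      lsAvgE s (rhHallRamp j) roomsAndHalls := by
  have h0 : EqOn (rhHallRamp j) (fun _ => 0) (rhOpenRoom 0) := fun z hz =>
    hallRamp_of_le (hz.1.2.le.trans (rhx_monotone hj))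
  have hj' : EqOn (rhHallRamp j) (fun _ => ((j + 1)! / 2 ^ (j + 2) : ℝ)) (rhOpenRoom j) :=
    fun z hz => by
      rw [rhHallRamp, hallRamp_of_ge (rhx_le_rhx' j) hz.1.1.le, rhx'_sub_rhx hj]
      field_simp
  have hjump : |((j + 1)! : ℝ) / 2 ^ (j + 2) - 0| / 2 = (j + 1)! / 2 ^ (j + 3) := by
    rw [sub_zero, abs_of_nonneg (by positivity), div_div, ← pow_succ]
  have hvol : ENNReal.ofReal (1 / 2 ^ (j + 2)) ≤
      min (volume (rhOpenRoom 0)) (volume (rhOpenRoom j)) := by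
    have hroom0 : rhx 1 - rhx' 0 = 1 / 2 := by norm_num [rhx, rhx']
    rw [volume_rhOpenRoom, volume_rhOpenRoom, rhx_succ_sub_rhx' hj, hroom0]
    exact le_min (ENNReal.ofReal_le_ofReal <|
      one_div_le_one_div_of_le two_pos (le_self_pow₀ one_le_two (by omega))) le_rfl
  refine le_trans ?_ (lsAvgE_ge_of_eqOn hs (isOpen_rhOpenRoom 0).measurableSet
    (isOpen_rhOpenRoom j).measurableSet (rhOpenRoom_subset 0) (rhOpenRoom_subset j) h0 hj')
  rw [hjump]
  exact mul_le_mul_right (mul_le_mul_right hvol _) _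

theorem tendsto_lsAvgE_rhHallRamp {s : ℝ} (hs : 1 ≤ s) :
    Tendsto (fun j => lsAvgE s (rhHallRamp j) roomsAndHalls) atTop (𝓝 ∞) := by
  have hhalf : Tendsto (fun j : ℕ => ((j + 1)! / 2 ^ (j + 3) : ℝ)) atTop atTop := by
    refine (((tendsto_factorial_div_pow_atTop two_pos).comp
      (tendsto_add_atTop_nat 1)).atTop_div_const (by norm_num : (0 : ℝ) < 4)).congr fun j => ?_
    simp only [Function.comp_apply]
    rw [div_div]; ring
  have hlow :
      Tendsto (fun j : ℕ => ((j + 1)! / 2 ^ (j + 3) : ℝ) * (1 / 2 ^ (j + 2))) atTop atTop := by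
    refine (((tendsto_factorial_div_pow_atTop (by norm_num : (0 : ℝ) < 4)).comp
      (tendsto_add_atTop_nat 1)).atTop_div_const (by norm_num : (0 : ℝ) < 8)).congr fun j => ?_
    simp only [Function.comp_apply]
    rw [show (4 : ℝ) ^ (j + 1) = 2 ^ (2 * (j + 1)) by rw [pow_mul]; norm_num]
    field_simp
    ring
  have hΩ : (volume roomsAndHalls)⁻¹ ≠ 0 :=
    ENNReal.inv_ne_zero.2 isBounded_roomsAndHalls.measure_lt_top.ne
  have hlow_top := ENNReal.Tendsto.const_mul (a := (volume roomsAndHalls)⁻¹)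
    (ENNReal.tendsto_ofReal_atTop.comp hlow) (.inl ENNReal.top_ne_zero)
  rw [ENNReal.mul_top hΩ] at hlow_top
  refine tendsto_nhds_top_mono hlow_top ?_
  filter_upwards [hhalf.eventually_ge_atTop 1, eventually_ge_atTop 1] with j hj1 hj
  refine le_trans ?_ (lsAvgE_rhHallRamp_ge (by linarith) hj)
  simp only [Function.comp_apply]
  rw [ENNReal.ofReal_mul (by positivity)]
  gcongr
  exact Real.self_le_rpow_of_one_le hj1 hs

/-- The rooms-and-halls domain is not `L^s`-averaging for any `1 ≤ s < ∞`. -/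
theorem roomsAndHalls_not_LsAveraging (s : ℝ) (hs : 1 ≤ s) :
    ¬ IsLsAveragingDomain s roomsAndHalls :=
  not_isLsAveragingDomain_of_tendsto (by linarith) rhHallRamp
    (fun _ => ((continuous_hallRamp.comp (by fun_prop)).locallyIntegrable).locallyIntegrableOn _)
    (fun j _ _ hρ hB => lsAvgE_hallRamp_ball_le_one (roomsAndHalls_strip j)
      (by positivity) (by linarith) hρ hB)
    (tendsto_lsAvgE_rhHallRamp hs)
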